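/- Let s ∈ ℕ and let f₀, …, f_s : ℝ → ℂ be continuous π-periodic functions such that Σ_{n∈ℤ} |a_n(f_j)| < ∞ for each j, and such that for every n ∈ ℤ one has Σ_{j=0}^{s} (1+2in)^j · a_n(f_j) = 0. Then Σ_{n∈ℤ} |(1+2in)·a_n(f_s)| < ∞; in particular Σ_{n∈ℤ} |n|·|a_n(f_s)| < ∞. -/

import Mathlib

noncomputable section

/-- The `n`-th Fourier coefficient `a_n(f) = (1/π) ∫₀^π f(θ) e^{-2inθ} dθ` of a π-periodic
function `f : ℝ → ℂ`. -/
def fc (f : ℝ → ℂ) (n : ℤ) : ℂ :=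
  (Real.pi : ℂ)⁻¹ * ∫ θ in (0:ℝ)..Real.pi, f θ * Complex.exp (-(2 * (n : ℂ) * Complex.I * (θ : ℂ)))

/-- If `Σ_j (1+2in)^j a_n(f_j) = 0` for every `n`, then `Σ_n |(1+2in) a_n(f_s)| < ∞`;
in particular `Σ_n |n| |a_n(f_s)| < ∞`. -/
theorem top_coefficient_summable (s : ℕ) (hs : 1 ≤ s) (f : Fin (s + 1) → ℝ → ℂ)
    (hc : ∀ j, Continuous (f j)) (hp : ∀ j, Function.Periodic (f j) Real.pi)
    (hsum : ∀ j, Summable fun n : ℤ => ‖fc (f j) n‖)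
    (hrel : ∀ n : ℤ, ∑ j : Fin (s + 1), (1 + 2 * (n : ℂ) * Complex.I) ^ (j : ℕ) * fc (f j) n = 0) :
    (Summable fun n : ℤ => ‖(1 + 2 * (n : ℂ) * Complex.I) * fc (f (Fin.last s)) n‖) ∧
    (Summable fun n : ℤ => |(n : ℝ)| * ‖fc (f (Fin.last s)) n‖) := by
  have hz1 : ∀ n : ℤ, 1 ≤ ‖(1 + 2 * (n : ℂ) * Complex.I)‖ := by
    intro n
    have h := Complex.abs_re_le_norm (1 + 2 * (n : ℂ) * Complex.I)
    have hre : (1 + 2 * (n : ℂ) * Complex.I).re = 1 := by simp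
    rw [hre] at h
    simpa using h
  have key : ∀ n : ℤ, ‖(1 + 2 * (n : ℂ) * Complex.I) * fc (f (Fin.last s)) n‖ ≤
      ∑ j : Fin s, ‖fc (f j.castSucc) n‖ := by
    intro n
    set z : ℂ := 1 + 2 * (n : ℂ) * Complex.I with hz
    have hz1' := hz1 n
    rw [← hz] at hz1'
    have hrel' := hrel n
    rw [Fin.sum_univ_castSucc] at hrel'
    have heq : z ^ s * fc (f (Fin.last s)) n = -∑ j : Fin s, z ^ (j : ℕ) * fc (f j.castSucc) n := by
      have : (Fin.last s : ℕ) = s := rfl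
      rw [this] at hrel'
      simp only [Fin.coe_castSucc] at hrel'
      linear_combination hrel'
    have h1 : ‖z‖ ^ s * ‖fc (f (Fin.last s)) n‖ ≤
        ‖z‖ ^ (s - 1) * ∑ j : Fin s, ‖fc (f j.castSucc) n‖ := by
      calc ‖z‖ ^ s * ‖fc (f (Fin.last s)) n‖ = ‖z ^ s * fc (f (Fin.last s)) n‖ := by
            rw [norm_mul, norm_pow]
        _ = ‖∑ j : Fin s, z ^ (j : ℕ) * fc (f j.castSucc) n‖ := by rw [heq, norm_neg]
        _ ≤ ∑ j : Fin s, ‖z ^ (j : ℕ) * fc (f j.castSucc) n‖ := norm_sum_le _ _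
        _ ≤ ∑ j : Fin s, ‖z‖ ^ (s - 1) * ‖fc (f j.castSucc) n‖ := by
            apply Finset.sum_le_sum
            intro j _
            rw [norm_mul, norm_pow]
            gcongr
            · omega
        _ = ‖z‖ ^ (s - 1) * ∑ j : Fin s, ‖fc (f j.castSucc) n‖ := by rw [Finset.mul_sum]
    have hzs : ‖z‖ ^ s = ‖z‖ ^ (s - 1) * ‖z‖ := by
      rw [← pow_succ]
      congr 1
      omega
    have hpos : 0 < ‖z‖ ^ (s - 1) := pow_pos (lt_of_lt_of_le one_pos hz1') _
    rw [hzs, mul_assoc] at h1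
    have h2 := (mul_le_mul_iff_right₀ hpos).mp h1
    rw [norm_mul]
    exact h2
  have hS : Summable (fun n : ℤ => ∑ j : Fin s, ‖fc (f j.castSucc) n‖) :=
    summable_sum fun j _ => hsum j.castSucc
  have h1 : Summable fun n : ℤ => ‖(1 + 2 * (n : ℂ) * Complex.I) * fc (f (Fin.last s)) n‖ :=
    hS.of_nonneg_of_le (fun n => norm_nonneg _) key
  refine ⟨h1, ?_⟩
  apply h1.of_nonneg_of_le (fun n => by positivity)
  intro n
  rw [norm_mul]
  gcongr
  have h := Complex.abs_im_le_norm (1 + 2 * (n : ℂ) * Complex.I)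
  have him : (1 + 2 * (n : ℂ) * Complex.I).im = 2 * (n : ℝ) := by simp
  rw [him] at h
  calc |(n : ℝ)| ≤ |2 * (n : ℝ)| := by rw [abs_mul]; simp [abs_of_nonneg]; nlinarith [abs_nonneg (n:ℝ)]
    _ ≤ ‖(1 + 2 * (n : ℂ) * Complex.I)‖ := h
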